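/- Let V_{2^N} = 2K_{2^{N+1}−1} − K_{2^N−1} be the de la Vallée Poussin kernel on 𝕋, where K_n is the Fejér kernel of order n, and set f = V_{2^N} ⊗ ⋯ ⊗ V_{2^N} (d-fold tensor product) on 𝕋^d. Then for every r > 0, ∫_{𝕋^d} |f| log^r(1+|f|) ≤ C_{r,d} N^r for some constant C_{r,d} depending only on r and d (for N large). -/

import Mathlib

open MeasureTheory
noncomputable section

/-- The (normalized) measure on the `d`-torus, modelled as `[0,1)^d ⊆ ℝ^d`. -/
def boxMeasure (d : ℕ) : Measure (Fin d → ℝ) :=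
  Measure.pi fun _ => MeasureTheory.volume.restrict (Set.Ico (0:ℝ) 1)

/-- The Fejér kernel of order `n` on `𝕋`. -/
def fejer (n : ℕ) (x : ℝ) : ℂ :=
  ∑ j ∈ Finset.Icc (-(n : ℤ)) (n : ℤ),
    (((1 : ℝ) - |(j : ℝ)| / (n + 1)) : ℂ) * Complex.exp (2 * Real.pi * Complex.I * j * x)

/-- The de la Vallée Poussin kernel `V_{2^N} = 2K_{2^{N+1}−1} − K_{2^N−1}`. -/
def vdp (N : ℕ) (x : ℝ) : ℂ := 2 * fejer (2 ^ (N + 1) - 1) x - fejer (2 ^ N - 1) x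

/-! Writing `e(x) = exp(2πix)`, the Fejér kernel is `K_n = |∑_{j=0}^n e(jx)|² / (n + 1)`: it is
nonnegative with mean one, so `‖K_n‖₁ = 1`, and `‖K_n‖_∞ ≤ n + 1`. Hence `‖V_{2^N}‖₁ ≤ 3` and
`‖V_{2^N}‖_∞ ≤ 2^{N+3}`. For the tensor product `f`, Fubini gives `‖f‖₁ ≤ 3^d`, while pointwise
`log(1 + |f|) ≤ log(1 + 2^{(N+3)d}) ≤ (4d + 1)N`; multiply the two bounds. -/

open Finset

lemma sum_zpow_mul_sum_zpow_neg {K : Type*} [Field K] (z : K) (hz : z ≠ 0) (n : ℕ) :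
    (∑ j ∈ Icc (0 : ℤ) n, z ^ j) * ∑ k ∈ Icc (0 : ℤ) n, z ^ (-k) =
      ∑ m ∈ Icc (-(n : ℤ)) n, ((n + 1 - |m| : ℤ) : K) * z ^ m := by
  have reindex (j : ℤ) : ∑ k ∈ Icc (0 : ℤ) n, z ^ j * z ^ (-k) = ∑ m ∈ Icc (j - n) j, z ^ m :=
    sum_nbij' (j - ·) (j - ·) (fun k hk => by simp only [mem_Icc] at hk ⊢; omega)
      (fun k hk => by simp only [mem_Icc] at hk ⊢; omega) (fun _ _ => sub_sub_cancel _ _)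
      (fun _ _ => sub_sub_cancel _ _) (fun k _ => by rw [← zpow_add₀ hz, sub_eq_add_neg])
  calc _ = ∑ j ∈ Icc (0 : ℤ) n, ∑ m ∈ Icc (j - n) j, z ^ m := by
        rw [sum_mul_sum]; exact sum_congr rfl fun j _ => reindex j
    -- the coefficient of `z ^ m` counts the `j ∈ [0, n]` with `j - m ∈ [0, n]`
    _ = ∑ m ∈ Icc (-(n : ℤ)) n, ∑ j ∈ Icc (max 0 m) (min n (m + n)), z ^ m :=
        sum_comm' fun j m => by simp only [mem_Icc]; omega
    _ = _ := by
        refine sum_congr rfl fun m hm => ?_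
        rw [mem_Icc] at hm
        have hcard : min (n : ℤ) (m + n) + 1 - max 0 m = n + 1 - |m| := by
          rw [abs_eq_max_neg]; omega
        rw [sum_const, Int.card_Icc, nsmul_eq_mul, hcard, ← Int.cast_natCast,
          Int.toNat_of_nonneg (by rw [abs_eq_max_neg]; omega)]

open Real Complex ComplexConjugate in
lemma fejer_eq_norm_sq_div (n : ℕ) (x : ℝ) :
    fejer n x = ((‖∑ j ∈ Icc (0 : ℤ) n, exp (2 * π * I * j * x)‖ ^ 2 / (n + 1) : ℝ) : ℂ) := by
  set z := exp (2 * π * I * x)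
  have hexp (j : ℤ) : exp (2 * π * I * j * x) = z ^ j := by
    rw [← exp_int_mul]; ring_nf
  have hconj : conj z = z⁻¹ := by
    rw [← exp_conj, ← Complex.exp_neg]; simp [map_ofNat]
  have hnorm : ((‖∑ j ∈ Icc (0 : ℤ) n, z ^ j‖ ^ 2 : ℝ) : ℂ) =
      ∑ m ∈ Icc (-(n : ℤ)) n, ((n + 1 - |m| : ℤ) : ℂ) * z ^ m := by
    rw [ofReal_pow, ← mul_conj', map_sum, ← sum_zpow_mul_sum_zpow_neg z (exp_ne_zero _)]
    simp only [map_zpow₀, hconj, inv_zpow, zpow_neg]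
  simp_rw [hexp]
  rw [ofReal_div, hnorm, ofReal_add, ofReal_one, ofReal_natCast,
    eq_div_iff (Nat.cast_add_one_ne_zero n), fejer, sum_mul]
  refine sum_congr rfl fun m _ => ?_
  rw [hexp]
  push_cast
  field_simp
  rw [← Int.cast_abs, ofReal_intCast, mul_comm]

lemma norm_fejer_eq_re (n : ℕ) (x : ℝ) : ‖fejer n x‖ = (fejer n x).re := by
  rw [fejer_eq_norm_sq_div, Complex.norm_real, Complex.ofReal_re,
    Real.norm_of_nonneg (by positivity)]

lemma norm_fejer_le (n : ℕ) (x : ℝ) : ‖fejer n x‖ ≤ n + 1 := by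
  have hD : ‖∑ j ∈ Icc (0 : ℤ) n, Complex.exp (2 * Real.pi * Complex.I * j * x)‖ ≤ n + 1 := by
    refine (norm_sum_le _ _).trans ?_
    simp [Complex.norm_exp]
  rw [fejer_eq_norm_sq_div, Complex.norm_real, Real.norm_of_nonneg (by positivity),
    div_le_iff₀ (by positivity)]
  nlinarith [norm_nonneg (∑ j ∈ Icc (0 : ℤ) n, Complex.exp (2 * Real.pi * Complex.I * j * x))]

lemma continuous_fejer (n : ℕ) : Continuous (fejer n) := by
  unfold fejer
  fun_prop

open Real Complex in
lemma integral_Ico_exp_two_pi_I_int_mul (j : ℤ) :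
    ∫ y in Set.Ico (0 : ℝ) 1, exp (2 * π * I * j * y) = if j = 0 then 1 else 0 := by
  rw [integral_Ico_eq_integral_Ioo, ← integral_Ioc_eq_integral_Ioo,
    ← intervalIntegral.integral_of_le zero_le_one]
  split_ifs with hj
  · simp [hj]
  · have hc : 2 * π * I * j ≠ 0 := by simp [hj, pi_ne_zero]
    rw [integral_exp_mul_complex hc, ofReal_one, mul_one, ofReal_zero, mul_zero, Complex.exp_zero,
      mul_comm, exp_int_mul_two_pi_mul_I, sub_self, zero_div]

lemma integral_Ico_fejer (n : ℕ) : ∫ y in Set.Ico (0 : ℝ) 1, fejer n y = 1 := by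
  have hchar (j : ℤ) :
      IntegrableOn (fun y : ℝ => Complex.exp (2 * Real.pi * Complex.I * j * y)) (Set.Ico 0 1) :=
    (Continuous.integrableOn_Icc (by fun_prop)).mono_set Set.Ico_subset_Icc_self
  unfold fejer
  rw [integral_finsetSum _ fun j _ => (hchar j).const_mul _, sum_eq_single 0]
  · simp
  · intro j _ hj
    rw [integral_const_mul, integral_Ico_exp_two_pi_I_int_mul, if_neg hj, mul_zero]
  · simp

lemma integral_Ico_norm_fejer (n : ℕ) : ∫ y in Set.Ico (0 : ℝ) 1, ‖fejer n y‖ = 1 := by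
  have hint : IntegrableOn (fejer n) (Set.Ico 0 1) :=
    (continuous_fejer n).integrableOn_Icc.mono_set Set.Ico_subset_Icc_self
  simp_rw [norm_fejer_eq_re]
  rw [← RCLike.re_eq_complex_re, integral_re hint, integral_Ico_fejer]
  simp

lemma norm_fejer_two_pow_sub_one_le (k : ℕ) (x : ℝ) : ‖fejer (2 ^ k - 1) x‖ ≤ 2 ^ k := by
  have := norm_fejer_le (2 ^ k - 1) x
  rwa [Nat.cast_sub Nat.one_le_two_pow, Nat.cast_pow, Nat.cast_ofNat, Nat.cast_one,
    sub_add_cancel] at this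

lemma continuous_vdp (N : ℕ) : Continuous (vdp N) :=
  (continuous_const.mul (continuous_fejer _)).sub (continuous_fejer _)

lemma norm_vdp_le (N : ℕ) (x : ℝ) : ‖vdp N x‖ ≤ 2 ^ (N + 3) := by
  have h₁ := norm_fejer_two_pow_sub_one_le (N + 1) x
  have h₂ := norm_fejer_two_pow_sub_one_le N x
  calc ‖vdp N x‖ ≤ 2 * ‖fejer (2 ^ (N + 1) - 1) x‖ + ‖fejer (2 ^ N - 1) x‖ := by
        refine (norm_sub_le _ _).trans_eq ?_
        rw [norm_mul, Complex.norm_ofNat]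
    _ ≤ 2 * 2 ^ (N + 1) + 2 ^ N := by gcongr
    _ ≤ 2 ^ (N + 3) := by ring_nf; linarith [pow_pos (two_pos : (0 : ℝ) < 2) N]

lemma integral_Ico_norm_vdp_le (N : ℕ) : ∫ y in Set.Ico (0 : ℝ) 1, ‖vdp N y‖ ≤ 3 := by
  have hint (n : ℕ) : IntegrableOn (fun y => ‖fejer n y‖) (Set.Ico 0 1) :=
    (continuous_fejer n).norm.integrableOn_Icc.mono_set Set.Ico_subset_Icc_self
  calc ∫ y in Set.Ico (0 : ℝ) 1, ‖vdp N y‖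
      ≤ ∫ y in Set.Ico (0 : ℝ) 1, (2 * ‖fejer (2 ^ (N + 1) - 1) y‖ + ‖fejer (2 ^ N - 1) y‖) := by
        refine integral_mono ((continuous_vdp N).norm.integrableOn_Icc.mono_set
          Set.Ico_subset_Icc_self) (((hint _).const_mul 2).add (hint _)) fun y => ?_
        refine (norm_sub_le _ _).trans_eq ?_
        rw [norm_mul, Complex.norm_ofNat]
    _ = 3 := by
        rw [integral_add ((hint _).const_mul 2) (hint _), integral_const_mul,
          integral_Ico_norm_fejer, integral_Ico_norm_fejer]
        norm_num

lemma integral_mul_log_one_add_rpow_le {α : Type*} [MeasurableSpace α] {μ : Measure α}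
    {g : α → ℝ} {M r : ℝ} (hr : 0 ≤ r) (hg : Integrable g μ) (hg₀ : ∀ᵐ x ∂μ, 0 ≤ g x)
    (hgM : ∀ᵐ x ∂μ, g x ≤ M) :
    ∫ x, g x * Real.log (1 + g x) ^ r ∂μ ≤ Real.log (1 + M) ^ r * ∫ x, g x ∂μ := by
  rw [← integral_const_mul]
  refine integral_mono_of_nonneg ?_ (hg.const_mul _) ?_
  · filter_upwards [hg₀] with x hx
    exact mul_nonneg hx (Real.rpow_nonneg (Real.log_nonneg (by linarith)) r)
  · filter_upwards [hg₀, hgM] with x hx hxM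
    rw [mul_comm]
    gcongr
    exact Real.log_nonneg (by linarith)

lemma Real.log_one_add_two_pow_le (k : ℕ) : Real.log (1 + 2 ^ k) ≤ k + 1 := by
  have hpow : (1 : ℝ) ≤ 2 ^ k := one_le_pow₀ one_le_two
  calc Real.log (1 + 2 ^ k) ≤ Real.log (2 ^ (k + 1)) :=
        Real.log_le_log (by positivity) (by rw [pow_succ]; linarith)
    _ = (k + 1) * Real.log 2 := by rw [Real.log_pow]; push_cast; rfl
    _ ≤ k + 1 :=
        mul_le_of_le_one_right (by positivity) (Real.log_two_lt_d9.le.trans (by norm_num))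

theorem vdp_LlogL_bound_general (d : ℕ) (r : ℝ) (hr : 0 < r) :
    ∃ C > 0, ∀ N : ℕ, 1 ≤ N →
      ∫ x, ‖∏ j : Fin d, vdp N (x j)‖ *
          Real.log (1 + ‖∏ j : Fin d, vdp N (x j)‖) ^ r ∂(boxMeasure d) ≤
        C * (N : ℝ) ^ r := by
  refine ⟨3 ^ d * (4 * d + 1 : ℝ) ^ r, by positivity, fun N hN => ?_⟩
  set g : (Fin d → ℝ) → ℝ := fun x => ∏ j, ‖vdp N (x j)‖
  have hg : Integrable g (boxMeasure d) := Integrable.fintype_prod fun _ =>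
    (continuous_vdp N).norm.integrableOn_Icc.mono_set Set.Ico_subset_Icc_self
  have hg_le (x : Fin d → ℝ) : g x ≤ 2 ^ ((N + 3) * d) := by
    calc g x ≤ ∏ _j : Fin d, (2 : ℝ) ^ (N + 3) :=
          prod_le_prod (fun _ _ => norm_nonneg _) fun j _ => norm_vdp_le N (x j)
      _ = 2 ^ ((N + 3) * d) := by rw [prod_const, card_univ, Fintype.card_fin, pow_mul]
  have hg_int : ∫ x, g x ∂(boxMeasure d) ≤ 3 ^ d := by
    rw [boxMeasure, integral_fintype_prod_eq_pow (fun y => ‖vdp N y‖), Fintype.card_fin]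
    exact pow_le_pow_left₀ (integral_nonneg fun _ => norm_nonneg _) (integral_Ico_norm_vdp_le N) d
  have hlog : Real.log (1 + 2 ^ ((N + 3) * d)) ≤ (4 * d + 1) * N := by
    refine (Real.log_one_add_two_pow_le _).trans ?_
    have : (1 : ℝ) ≤ N := by exact_mod_cast hN
    push_cast
    nlinarith
  simp_rw [norm_prod]
  calc ∫ x, g x * Real.log (1 + g x) ^ r ∂(boxMeasure d)
      ≤ Real.log (1 + 2 ^ ((N + 3) * d)) ^ r * ∫ x, g x ∂(boxMeasure d) :=
        integral_mul_log_one_add_rpow_le hr.le hg (.of_forall fun _ => by positivity)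
          (.of_forall hg_le)
    _ ≤ ((4 * d + 1) * N) ^ r * 3 ^ d := by
        gcongr
        exact Real.log_nonneg (le_add_of_nonneg_right (by positivity))
    _ = 3 ^ d * (4 * d + 1 : ℝ) ^ r * (N : ℝ) ^ r := by
        rw [Real.mul_rpow (by positivity) (by positivity)]
        ring

/-- The `L log^r L` norm of the tensor de la Vallée Poussin kernel grows like `N^r`. -/
theorem vdp_LlogL_bound (d : ℕ) (hd : 0 < d) (r : ℝ) (hr : 0 < r) :
    ∃ C > 0, ∀ N : ℕ, 1 ≤ N →
      ∫ x, ‖∏ j : Fin d, vdp N (x j)‖ *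
          Real.log (1 + ‖∏ j : Fin d, vdp N (x j)‖) ^ r ∂(boxMeasure d) ≤
        C * (N : ℝ) ^ r :=
  vdp_LlogL_bound_general d r hr
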